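/- The Laplace mechanism with scale Δ/ε is (ε,0)-differentially private: if f : D → ℝ^k has ℓ1-sensitivity at most Δ on neighboring databases, then the mechanism A(D) = f(D) + (Y₁,…,Y_k) with i.i.d. Y_i ~ Lap(Δ/ε) satisfies, for all neighboring D₁, D₂ and all measurable S ⊆ ℝ^k, Pr[A(D₁) ∈ S] ≤ e^ε · Pr[A(D₂) ∈ S]. -/

import Mathlib

open MeasureTheory Real

/-- The Laplace distribution with scale `b`. -/
noncomputable def laplaceMeasure (b : ℝ) : Measure ℝ :=
  volume.withDensity (fun y => ENNReal.ofReal ((1 / (2 * b)) * Real.exp (-|y| / b)))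

/-- The Laplace mechanism: add i.i.d. `Lap(Δ/ε)` noise to each coordinate of `f D`. -/
noncomputable def laplaceMechanism {D : Type*} (k : ℕ) (f : D → Fin k → ℝ) (b : ℝ)
    (d : D) : Measure (Fin k → ℝ) :=
  Measure.map (fun y i => f d i + y i) (Measure.pi (fun _ : Fin k => laplaceMeasure b))

/-!
Each coordinate of the mechanism is a translate of the Laplace law, and the Laplace density
satisfies `ℓ_b(x - a) ≤ e^{|a - a'|/b} ℓ_b(x - a')` by the triangle inequality. So the law of
`f(D₁)ᵢ + Yᵢ` is at most `e^{|f(D₁)ᵢ - f(D₂)ᵢ|/b}` times that of `f(D₂)ᵢ + Yᵢ`. Product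
measures are monotone and pull out scalar factors, hence the law at `D₁` is at most
`e^{‖f D₁ - f D₂‖₁/b} ≤ e^ε` times the law at `D₂`.
-/

open scoped NNReal ENNReal

namespace MeasureTheory.Measure

section Pi

variable {ι : Type*} [Fintype ι] {α : ι → Type*} [∀ i, MeasurableSpace (α i)]

theorem pi_mono {μ ν : ∀ i, Measure (α i)} (h : ∀ i, μ i ≤ ν i) :
    Measure.pi μ ≤ Measure.pi ν := by
  refine le_iff.2 fun s hs => ?_
  rw [pi_def, pi_def, toMeasure_apply _ _ hs, toMeasure_apply _ _ hs]
  exact OuterMeasure.le_boundedBy.2 (fun t => (OuterMeasure.boundedBy_le t).trans <|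
    Finset.prod_le_prod' fun i _ => h i _) s

theorem pi_smul (μ : ∀ i, Measure (α i)) [∀ i, SigmaFinite (μ i)] (c : ι → ℝ≥0) :
    Measure.pi (fun i => c i • μ i) = (∏ i, c i) • Measure.pi μ := by
  refine pi_eq fun s hs => ?_
  simp only [coe_nnreal_smul_apply, pi_pi, Finset.prod_mul_distrib, ENNReal.ofNNReal_finsetProd]

end Pi

theorem map_add_left_withDensity {G : Type*} [MeasurableSpace G] [AddGroup G] [MeasurableAdd G]
    (μ : Measure G) [μ.IsAddLeftInvariant] (a : G) (p : G → ℝ≥0∞) :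
    (μ.withDensity p).map (a + ·) = μ.withDensity fun x => p (-a + x) := by
  ext s hs
  rw [map_apply (measurable_const_add a) hs, withDensity_apply _ (measurable_const_add a hs),
    withDensity_apply _ hs]
  simpa only [neg_add_cancel_left] using
    (measurePreserving_add_left μ a).setLIntegral_comp_preimage_emb
      (MeasurableEquiv.addLeft a).measurableEmbedding (fun x => p (-a + x)) s

end MeasureTheory.Measure

noncomputable def laplacePDF (b x : ℝ) : ℝ := 1 / (2 * b) * exp (-|x| / b)

theorem laplacePDF_sub_le {b : ℝ} (hb : 0 ≤ b) (x a a' : ℝ) :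
    laplacePDF b (x - a) ≤ exp (|a - a'| / b) * laplacePDF b (x - a') := by
  have htri : |x - a'| ≤ |x - a| + |a - a'| := abs_sub_le x a a'
  rw [laplacePDF, laplacePDF, mul_left_comm, ← exp_add, ← add_div]
  gcongr
  linarith

theorem map_add_laplaceMeasure (b a : ℝ) :
    (laplaceMeasure b).map (a + ·) =
      volume.withDensity fun x => .ofReal (laplacePDF b (x - a)) := by
  simp only [laplaceMeasure, Measure.map_add_left_withDensity, neg_add_eq_sub, laplacePDF]

theorem map_add_laplaceMeasure_le {b : ℝ} (hb : 0 ≤ b) (a a' : ℝ) :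
    (laplaceMeasure b).map (a + ·) ≤
      (exp (|a - a'| / b)).toNNReal • (laplaceMeasure b).map (a' + ·) := by
  refine Measure.le_iff.2 fun s hs => ?_
  rw [Measure.coe_nnreal_smul_apply, map_add_laplaceMeasure, map_add_laplaceMeasure,
    withDensity_apply _ hs, withDensity_apply _ hs, ← lintegral_const_mul' _ _ ENNReal.coe_ne_top]
  refine lintegral_mono fun x => ?_
  rw [ENNReal.ofNNReal_toNNReal, ← ENNReal.ofReal_mul (exp_pos _).le]
  exact ENNReal.ofReal_le_ofReal (laplacePDF_sub_le hb x a a')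

instance sigmaFinite_map_add_laplaceMeasure (b a : ℝ) :
    SigmaFinite ((laplaceMeasure b).map (a + ·)) := by
  rw [map_add_laplaceMeasure]; infer_instance

theorem laplaceMechanism_eq_pi {D : Type*} (k : ℕ) (f : D → Fin k → ℝ) (b : ℝ) (d : D) :
    laplaceMechanism k f b d = Measure.pi fun i => (laplaceMeasure b).map (f d i + ·) :=
  Measure.pi_map_pi fun _ => (measurable_const_add _).aemeasurable

theorem laplaceMechanism_le_smul {D : Type*} (k : ℕ) (f : D → Fin k → ℝ) {b : ℝ}
    (hb : 0 ≤ b) (d₁ d₂ : D) :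
    laplaceMechanism k f b d₁ ≤
      (exp ((∑ i, |f d₁ i - f d₂ i|) / b)).toNNReal • laplaceMechanism k f b d₂ := by
  have hexp : ∏ i, (exp (|f d₁ i - f d₂ i| / b)).toNNReal
      = (exp ((∑ i, |f d₁ i - f d₂ i|) / b)).toNNReal := by
    rw [Finset.sum_div, exp_sum, Real.toNNReal_prod_of_nonneg fun _ _ => (exp_pos _).le]
  rw [laplaceMechanism_eq_pi, laplaceMechanism_eq_pi, ← hexp, ← Measure.pi_smul]
  exact Measure.pi_mono fun i => map_add_laplaceMeasure_le hb _ _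

/-- The Laplace mechanism with scale `Δ/ε` is `(ε,0)`-differentially private: if `f` has
ℓ1-sensitivity at most `Δ` on neighboring databases, then for all neighboring `D₁, D₂` and
all measurable `S`, `Pr[A(D₁) ∈ S] ≤ e^ε · Pr[A(D₂) ∈ S]`. -/
theorem laplace_mechanism_dp {D : Type*} (neighbor : D → D → Prop) (k : ℕ)
    (f : D → Fin k → ℝ) (Δ ε : ℝ) (hΔ : 0 < Δ) (hε : 0 < ε)
    (hsens : ∀ D₁ D₂, neighbor D₁ D₂ → ∑ i, |f D₁ i - f D₂ i| ≤ Δ) :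
    ∀ D₁ D₂, neighbor D₁ D₂ → ∀ S : Set (Fin k → ℝ), MeasurableSet S →
      laplaceMechanism k f (Δ / ε) D₁ S ≤
        ENNReal.ofReal (Real.exp ε) * laplaceMechanism k f (Δ / ε) D₂ S := by
  intro D₁ D₂ hnb S _
  have hsum : (∑ i, |f D₁ i - f D₂ i|) / (Δ / ε) ≤ ε := by
    rw [div_le_iff₀ (by positivity), mul_div_cancel₀ _ hε.ne']
    exact hsens D₁ D₂ hnb
  calc laplaceMechanism k f (Δ / ε) D₁ S
      ≤ ((exp ((∑ i, |f D₁ i - f D₂ i|) / (Δ / ε))).toNNReal •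
          laplaceMechanism k f (Δ / ε) D₂) S :=
        laplaceMechanism_le_smul k f (by positivity) D₁ D₂ S
    _ ≤ ENNReal.ofReal (exp ε) * laplaceMechanism k f (Δ / ε) D₂ S := by
        rw [Measure.coe_nnreal_smul_apply, ENNReal.ofNNReal_toNNReal]
        gcongr
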